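/- Φ_{u_M}^{−1}((τ_i)_{i≥1}) = (λ_i)_{i≥1} (equivalently, the induced map sends the Komornik–Loreti constant for alphabet {0,…,M} to the Komornik–Loreti constant for alphabet {0,1}). Moreover, for every n ≥ 1, Φ_{u_M}^{−1}(α*(q_n'(1))) = α(q_{n+1}'(M)), where α*(q_n'(1)) = τ_1…τ_{2^{n−1}}(overline(τ_1…τ_{2^{n−1}})⁺)^∞ with reflection taken over the alphabet {0,1}. -/

import Mathlib

open Filter Set

/-- Strict lexicographic order on digit sequences (0-indexed). -/
def seqLt (x y : ℕ → ℕ) : Prop := ∃ n, (∀ i < n, x i = y i) ∧ x n < y n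

/-- Weak lexicographic order on digit sequences. -/
def seqLe (x y : ℕ → ℕ) : Prop := seqLt x y ∨ x = y

/-- The sequence w0^∞ associated with a finite word. -/
def wordSeq (w : List ℕ) : ℕ → ℕ := fun i => w.getD i 0

/-- Words are compared via w ↦ w0^∞. -/
def wordLt (u v : List ℕ) : Prop := seqLt (wordSeq u) (wordSeq v)

def wordLe (u v : List ℕ) : Prop := seqLe (wordSeq u) (wordSeq v)

/-- Reflection of a sequence: each digit c is replaced by M - c. -/
def reflSeq (M : ℕ) (x : ℕ → ℕ) : ℕ → ℕ := fun i => M - x i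

/-- Reflection of a word. -/
def reflW (M : ℕ) (w : List ℕ) : List ℕ := w.map (fun c => M - c)

/-- w⁺ : add one to the last digit. -/
def wplus (w : List ℕ) : List ℕ := w.dropLast ++ [w.getLast! + 1]

/-- w⁻ : subtract one from the last digit. -/
def wminus (w : List ℕ) : List ℕ := w.dropLast ++ [w.getLast! - 1]

/-- n-fold left shift σⁿ. -/
def shiftn (x : ℕ → ℕ) (n : ℕ) : ℕ → ℕ := fun i => x (n + i)

/-- The prefix of length n of a sequence, as a word. -/
def pref (x : ℕ → ℕ) (n : ℕ) : List ℕ := (List.range n).map x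

/-- The periodic sequence w^∞. -/
def periodic (w : List ℕ) : ℕ → ℕ := fun i => w.getD (i % w.length) 0

/-- The eventually periodic sequence u v^∞. -/
def wordThenPer (u v : List ℕ) : ℕ → ℕ :=
  fun i => if i < u.length then u.getD i 0 else v.getD ((i - u.length) % v.length) 0

/-- A fundamental word over the alphabet {0,…,M}. -/
def IsFundamental (M : ℕ) (a : List ℕ) : Prop :=
  (∀ d ∈ a, d ≤ M) ∧
  ((a.length = 1 ∧ 2 ≤ M ∧ M - a.head! ≤ a.head! ∧ a.head! < M) ∨
   (2 ≤ a.length ∧ ∀ i, 1 ≤ i → i < a.length →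
     wordLe (reflW M (a.take (a.length - i))) (a.drop i) ∧
     wordLt (a.drop i) (a.take (a.length - i))))

/-- The block emitted by the two-state automaton computing Φ_a⁻¹, as a function of the previous
bit (`0` at the start, so that the automaton is in state A after a `1` and in state B after
a `0`) and the current bit: (1,1) ↦ overline(a), (1,0) ↦ overline(a⁺), (0,1) ↦ a⁺, (0,0) ↦ a. -/
def block (M : ℕ) (a : List ℕ) (prev cur : ℕ) : List ℕ :=
  if prev = 1 then (if cur = 1 then reflW M a else reflW M (wplus a))
  else (if cur = 1 then wplus a else a)

/-- Φ_a⁻¹ applied to a finite {0,1}-word b (whose first digit should be 1):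
the concatenation of the blocks emitted by the automaton. -/
def phiInv (M : ℕ) (a : List ℕ) (b : List ℕ) : List ℕ :=
  (List.range b.length).flatMap
    (fun i => block M a (if i = 0 then 0 else b.getD (i - 1) 0) (b.getD i 0))

/-- Φ_a⁻¹ applied to an infinite {0,1}-sequence b (whose first digit should be 1). -/
def phiInvSeq (M : ℕ) (a : List ℕ) (b : ℕ → ℕ) : ℕ → ℕ :=
  fun j =>
    (block M a (if j / a.length = 0 then 0 else b (j / a.length - 1)) (b (j / a.length))).getD
      (j % a.length) 0

/-- The set V = {x ∈ Ω_M : overline(x) ≼ σⁿ(x) ≼ x for all n ≥ 0}. -/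
def Vset (M : ℕ) : Set (ℕ → ℕ) :=
  {x | (∀ i, x i ≤ M) ∧ ∀ n, seqLe (reflSeq M x) (shiftn x n) ∧ seqLe (shiftn x n) x}

/-- An irreducible sequence (a_i) ∈ V: whenever a_j > 0 and (a_1…a_j⁻)^∞ ∈ V, one has
a_1…a_j(overline(a_1…a_j)⁺)^∞ ≺ (a_i). -/
def IrreducibleSeq (M : ℕ) (x : ℕ → ℕ) : Prop :=
  x ∈ Vset M ∧
  ∀ j, 1 ≤ j → 0 < x (j - 1) → periodic (wminus (pref x j)) ∈ Vset M →
    seqLt (wordThenPer (pref x j) (wplus (reflW M (pref x j)))) x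

/-- An irreducible fundamental word: one that is not a composition c∘d with c ∈ A_M, d ∈ A_1. -/
def IrreducibleWord (M : ℕ) (a : List ℕ) : Prop :=
  IsFundamental M a ∧
  ¬∃ c d : List ℕ, IsFundamental M c ∧ IsFundamental 1 d ∧ a = phiInv M c d

/-- a is the quasi-greedy q-expansion of 1 over alphabet {0,…,M}: the lexicographically largest
sequence with digits ≤ M, not ending in 0^∞, with Σ a_i q^{-i} = 1. -/
def isQuasiGreedy (M : ℕ) (q : ℝ) (a : ℕ → ℕ) : Prop :=
  (∀ i, a i ≤ M) ∧ (∀ N, ∃ i, N ≤ i ∧ a i ≠ 0) ∧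
  (∑' i : ℕ, (a i : ℝ) / q ^ (i + 1)) = 1 ∧
  ∀ b : ℕ → ℕ, (∀ i, b i ≤ M) → (∀ N, ∃ i, N ≤ i ∧ b i ≠ 0) →
    (∑' i : ℕ, (b i : ℝ) / q ^ (i + 1)) = 1 → seqLe b a

open Classical in
/-- The quasi-greedy expansion α(q) (well defined for q ∈ (1, M+1]). -/
noncomputable def alphaF (M : ℕ) (q : ℝ) : ℕ → ℕ :=
  if h : ∃ a, isQuasiGreedy M q a then h.choose else fun _ => 0

/-- The shifted Thue–Morse sequence: τ_i = (sum of binary digits of i) mod 2, τ_0 = 0. -/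
def tau (i : ℕ) : ℕ := (Nat.digits 2 i).sum % 2

/-- λ_i = k + τ_i - τ_{i-1} if M = 2k, and k + τ_i if M = 2k+1. -/
def lam (M i : ℕ) : ℕ := if M % 2 = 0 then M / 2 + tau i - tau (i - 1) else M / 2 + tau i

/-- The sequence (λ_i)_{i≥1} = α(q_KL), 0-indexed. -/
def lamSeq (M : ℕ) : ℕ → ℕ := fun n => lam M (n + 1)

/-- The sequence (τ_i)_{i≥1}, 0-indexed. -/
def tauSeq : ℕ → ℕ := fun n => tau (n + 1)

/-- The unit lift u_M: the word k if M = 2k, and (k+1)k if M = 2k+1. -/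
def unitLift (M : ℕ) : List ℕ := if M % 2 = 0 then [M / 2] else [M / 2 + 1, M / 2]

/-- α(q_n') = λ_1…λ_{2^{n-1}}(overline(λ_1…λ_{2^{n-1}})⁺)^∞ for M even, and
λ_1…λ_{2^n}(overline(λ_1…λ_{2^n})⁺)^∞ for M odd (n ≥ 1). -/
def alphaQn (M n : ℕ) : ℕ → ℕ :=
  wordThenPer (pref (lamSeq M) (if M % 2 = 0 then 2 ^ (n - 1) else 2 ^ n))
    (wplus (reflW M (pref (lamSeq M) (if M % 2 = 0 then 2 ^ (n - 1) else 2 ^ n))))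

/-- Ũ_q = {x ∈ Ω_M : overline(α(q)) ≺ σⁿ(x) ≺ α(q) for all n ≥ 0}. -/
def Utilde (M : ℕ) (q : ℝ) : Set (ℕ → ℕ) :=
  {x | (∀ i, x i ≤ M) ∧
    ∀ n, seqLt (reflSeq M (alphaF M q)) (shiftn x n) ∧ seqLt (shiftn x n) (alphaF M q)}

/-- V_q = {x ∈ Ω_M : overline(α(q)) ≼ σⁿ(x) ≼ α(q) for all n ≥ 0}. -/
def VqSet (M : ℕ) (q : ℝ) : Set (ℕ → ℕ) :=
  {x | (∀ i, x i ≤ M) ∧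
    ∀ n, seqLe (reflSeq M (alphaF M q)) (shiftn x n) ∧ seqLe (shiftn x n) (alphaF M q)}

/-- B_n(X): the set of length-n prefixes of sequences in X. -/
def prefixSet (X : Set (ℕ → ℕ)) (n : ℕ) : Set (List ℕ) := (fun x => pref x n) '' X

/-- Topological entropy h(X) = lim (log #B_n(X))/n (the limit exists for shift-invariant X,
in which case it coincides with the limsup used here). -/
noncomputable def entropyOf (X : Set (ℕ → ℕ)) : ℝ :=
  Filter.atTop.limsup fun n : ℕ => Real.log (Nat.card ↥(prefixSet X n)) / n

/-- The entropy function H(q) = h(Ũ_q). -/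
noncomputable def Hent (M : ℕ) (q : ℝ) : ℝ := entropyOf (Utilde M q)

/-- c_M = 1 for even M, 1/2 for odd M. -/
noncomputable def cM (M : ℕ) : ℝ := if M % 2 = 0 then 1 else 1 / 2

/-- The fundamental interval J_a = [q_L(a), q_R(a)], described via the characterizations
α(q_L(a)) = a^∞ and α(q_R(a)) = a⁺(overline(a))^∞. -/
def Jset (M : ℕ) (a : List ℕ) : Set ℝ :=
  {q | ∃ qL qR : ℝ, qL ∈ Set.Ioc (1:ℝ) ((M:ℝ)+1) ∧ qR ∈ Set.Ioc (1:ℝ) ((M:ℝ)+1) ∧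
    alphaF M qL = periodic a ∧ alphaF M qR = wordThenPer (wplus a) (reflW M a) ∧
    q ∈ Set.Icc qL qR}

/-- The word w occurs (as a factor) in some sequence of X. -/
def occursIn (w : List ℕ) (X : Set (ℕ → ℕ)) : Prop :=
  ∃ x ∈ X, ∃ k, ∀ i < w.length, x (k + i) = w.getD i 0

/-- [pL, pR] is an entropy plateau: a maximal interval in (1, M+1] on which H is positive
and constant. -/
def IsPlateau (M : ℕ) (pL pR : ℝ) : Prop :=
  pL ≤ pR ∧ Set.Icc pL pR ⊆ Set.Ioc 1 ((M:ℝ)+1) ∧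
  (∀ q ∈ Set.Icc pL pR, 0 < Hent M q ∧ Hent M q = Hent M pL) ∧
  ∀ S : Set ℝ, S.OrdConnected → S ⊆ Set.Ioc 1 ((M:ℝ)+1) →
    (∀ q ∈ S, 0 < Hent M q) → (∀ q ∈ S, ∀ q' ∈ S, Hent M q = Hent M q') →
    Set.Icc pL pR ⊆ S → S = Set.Icc pL pR

/-- An n-irreducible word (n ≥ 1): a = u_M ∘ (10)^{∘(n-1)} ∘ b with b ∈ A_1 irreducible. -/
def nIrreducibleWord (M n : ℕ) (a : List ℕ) : Prop :=
  ∃ b : List ℕ, IrreducibleWord 1 b ∧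
    a = phiInv M ((fun w => phiInv M w [1, 0])^[n - 1] (unitLift M)) b

/-!
For `M = 2k` the unit lift is the single digit `k` and Φ_{u_M}⁻¹ sends a bit sequence `b` to
`(k + b_i - b_{i-1})`; for `M = 2k+1` it is `(k+1)k` and each bit `b_i` becomes the pair
`(k + 1 - b_{i-1}, k + b_i)`. The Thue–Morse recursions `τ_{2m} = τ_m`, `τ_{2m+1} = 1 - τ_m` turn
`(τ_i)` into `(λ_i)` under these rules.

Because `τ_{L+i} = 1 - τ_i` for `i < L = 2^m`, one has
`λ_{L+1} … λ_{2L} = overline(λ_1 … λ_L)⁺`, so every α(q_n') is `x_1 … x_{2L} (x_{L+1} … x_{2L})^∞`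
with `x = λ`, and likewise with `x = τ` over `{0,1}`. The automaton only remembers the previous
bit and `τ_L = τ_{2L} = 1`, so Φ_{u_M}⁻¹ commutes with this periodic extension (with `L` scaled
by `|u_M|`), and the second claim follows from the first.
-/

theorem tau_le_one (i : ℕ) : tau i ≤ 1 :=
  Nat.le_of_lt_succ (Nat.mod_lt _ two_pos)

theorem tau_two_mul (m : ℕ) : tau (2 * m) = tau m := by
  rcases Nat.eq_zero_or_pos m with rfl | hm
  · rfl
  · simp [tau, Nat.digits_def' one_lt_two (by omega : 0 < 2 * m)]

theorem tau_two_mul_add_one (m : ℕ) : tau (2 * m + 1) = 1 - tau m := by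
  have hdigits := Nat.digits_def' one_lt_two (Nat.succ_pos (2 * m))
  rw [show (2 * m).succ % 2 = 1 by omega, show (2 * m).succ / 2 = m by omega] at hdigits
  simp only [tau, hdigits, List.sum_cons]
  omega

theorem tau_two_pow (m : ℕ) : tau (2 ^ m) = 1 := by
  induction m with
  | zero => rfl
  | succ m ih => rw [pow_succ', tau_two_mul, ih]

theorem tau_two_pow_add {m i : ℕ} (hi : i < 2 ^ m) : tau (2 ^ m + i) = 1 - tau i := by
  induction m generalizing i with
  | zero =>
    obtain rfl : i = 0 := by omega
    rfl
  | succ m ih =>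
    obtain ⟨i, rfl | rfl⟩ := Nat.even_or_odd' i
    · rw [pow_succ', ← mul_add, tau_two_mul, tau_two_mul, ih (by omega)]
    · rw [pow_succ', ← add_assoc, ← mul_add, tau_two_mul_add_one, tau_two_mul_add_one,
        ih (by omega)]

theorem lamSeq_one : lamSeq 1 = tauSeq := by
  funext i
  simp [lamSeq, lam, tauSeq]

theorem lamSeq_of_even {M : ℕ} (hM : M % 2 = 0) (i : ℕ) :
    lamSeq M i = M / 2 + tau (i + 1) - tau i := by
  simp [lamSeq, lam, hM]

theorem lamSeq_of_odd {M : ℕ} (hM : M % 2 = 1) (i : ℕ) : lamSeq M i = M / 2 + tau (i + 1) := by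
  simp [lamSeq, lam, hM]

theorem pref_succ (x : ℕ → ℕ) (n : ℕ) : pref x (n + 1) = pref x n ++ [x n] := by
  simp [pref, List.range_succ]

theorem wplus_reflW_pref_succ (M : ℕ) (x : ℕ → ℕ) (n : ℕ) :
    wplus (reflW M (pref x (n + 1))) = pref (fun i => M - x i) n ++ [M - x n + 1] := by
  rw [pref_succ, reflW, List.map_append, wplus]
  simp [pref]

theorem lamSeq_two_pow_add {M : ℕ} (hM : 1 ≤ M) {m r : ℕ} (hr : r + 1 < 2 ^ m) :
    lamSeq M (2 ^ m + r) = M - lamSeq M r := by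
  have h0 := tau_two_pow_add (m := m) (i := r) (by omega)
  have h1 := tau_two_pow_add (m := m) (i := r + 1) hr
  have := tau_le_one r
  have := tau_le_one (r + 1)
  rw [← add_assoc] at h1
  rcases Nat.mod_two_eq_zero_or_one M with hM2 | hM2
  · rw [lamSeq_of_even hM2, lamSeq_of_even hM2]; omega
  · rw [lamSeq_of_odd hM2, lamSeq_of_odd hM2]; omega

theorem lamSeq_two_pow_succ_sub_one {M : ℕ} (hM : 1 ≤ M) (m : ℕ) :
    lamSeq M (2 ^ (m + 1) - 1) = M - lamSeq M (2 ^ m - 1) + 1 := by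
  have hpos := Nat.two_pow_pos m
  have hsplit : 2 ^ (m + 1) - 1 = 2 ^ m + (2 ^ m - 1) := by rw [pow_succ]; omega
  have h0 := tau_two_pow_add (m := m) (i := 2 ^ m - 1) (by omega)
  have h1 := tau_two_pow (m + 1)
  have h2 := tau_two_pow m
  have := tau_le_one (2 ^ m - 1)
  rw [← hsplit] at h0
  rw [← Nat.sub_add_cancel (Nat.one_le_two_pow (n := m + 1))] at h1
  rw [← Nat.sub_add_cancel (Nat.one_le_two_pow (n := m))] at h2
  rcases Nat.mod_two_eq_zero_or_one M with hM2 | hM2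
  · rw [lamSeq_of_even hM2, lamSeq_of_even hM2]; omega
  · rw [lamSeq_of_odd hM2, lamSeq_of_odd hM2]; omega

/-- λ_{L+1} … λ_{2L} = overline(λ_1 … λ_L)⁺ for every power of two L. -/
theorem pref_shiftn_lamSeq_two_pow {M : ℕ} (hM : 1 ≤ M) (m : ℕ) :
    pref (shiftn (lamSeq M) (2 ^ m)) (2 ^ m) = wplus (reflW M (pref (lamSeq M) (2 ^ m))) := by
  obtain ⟨n, hn⟩ : ∃ n, 2 ^ m = n + 1 := Nat.exists_eq_add_one.mpr (Nat.two_pow_pos m)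
  have hlast := lamSeq_two_pow_succ_sub_one hM m
  rw [pow_succ, hn, show (n + 1) * 2 - 1 = n + 1 + n by omega, Nat.add_sub_cancel] at hlast
  rw [hn, pref_succ, wplus_reflW_pref_succ]
  congr 1
  · refine List.map_congr_left fun i hi => ?_
    have hi : i + 1 < 2 ^ m := hn ▸ Nat.succ_lt_succ (List.mem_range.mp hi)
    simpa only [shiftn, hn] using lamSeq_two_pow_add hM hi
  · simp only [shiftn, hlast]

/-- `x ∘ periodicTailIndex L` is the sequence x₀ … x_{L-1} (x_L … x_{2L-1})^∞. -/
def periodicTailIndex (L j : ℕ) : ℕ := if j < L then j else L + (j - L) % L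

theorem wordThenPer_pref_pref_shiftn (x : ℕ → ℕ) {L : ℕ} (hL : 0 < L) :
    wordThenPer (pref x L) (pref (shiftn x L) L) = x ∘ periodicTailIndex L := by
  funext j
  have hmod : (j - L) % L < L := Nat.mod_lt _ hL
  simp only [wordThenPer, periodicTailIndex, Function.comp_apply, pref, List.length_map,
    List.length_range]
  split_ifs with hj
  · simp [hj]
  · simp [hmod, shiftn]

theorem alphaQn_eq_lamSeq_comp {M : ℕ} (hM : 1 ≤ M) (n : ℕ) :
    alphaQn M n = lamSeq M ∘ periodicTailIndex (if M % 2 = 0 then 2 ^ (n - 1) else 2 ^ n) := by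
  obtain ⟨m, hm⟩ : ∃ m, (if M % 2 = 0 then 2 ^ (n - 1) else 2 ^ n) = 2 ^ m := by
    split_ifs <;> exact ⟨_, rfl⟩
  rw [alphaQn, hm, ← pref_shiftn_lamSeq_two_pow hM,
    wordThenPer_pref_pref_shiftn _ (Nat.two_pow_pos m)]

theorem alphaQn_one_eq_tauSeq_comp (n : ℕ) :
    alphaQn 1 n = tauSeq ∘ periodicTailIndex (2 ^ n) := by
  simpa [lamSeq_one] using alphaQn_eq_lamSeq_comp le_rfl n

def prevBit (b : ℕ → ℕ) (i : ℕ) : ℕ := if i = 0 then 0 else b (i - 1)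

theorem prevBit_tauSeq (i : ℕ) : prevBit tauSeq i = tau i := by
  rcases i with _ | i <;> rfl

theorem prevBit_le_one {b : ℕ → ℕ} (hb : ∀ i, b i ≤ 1) (i : ℕ) : prevBit b i ≤ 1 := by
  unfold prevBit
  split_ifs
  exacts [zero_le_one, hb _]

theorem phiInvSeq_mul_add (M : ℕ) {a : List ℕ} (b : ℕ → ℕ) (i : ℕ) {p : ℕ} (hp : p < a.length) :
    phiInvSeq M a b (a.length * i + p) = (block M a (prevBit b i) (b i)).getD p 0 := by
  have hdiv : (a.length * i + p) / a.length = i := by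
    rw [Nat.mul_add_div (by omega), Nat.div_eq_of_lt hp, add_zero]
  have hmod : (a.length * i + p) % a.length = p := by rw [Nat.mul_add_mod, Nat.mod_eq_of_lt hp]
  simp only [phiInvSeq, hdiv, hmod, prevBit]

theorem periodicTailIndex_mul_add (L : ℕ) {ℓ p : ℕ} (i : ℕ) (hp : p < ℓ) :
    periodicTailIndex (L * ℓ) (ℓ * i + p) = ℓ * periodicTailIndex L i + p := by
  rcases Nat.eq_zero_or_pos L with rfl | hL
  · simp [periodicTailIndex]
  unfold periodicTailIndex
  by_cases hi : i < L
  · have : ℓ * i + p < L * ℓ := by nlinarith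
    rw [if_pos hi, if_pos this]
  · obtain ⟨d, rfl⟩ := Nat.exists_eq_add_of_le (not_lt.mp hi)
    have hsub : ℓ * (L + d) + p - L * ℓ = ℓ * d + p := by
      rw [mul_add, mul_comm L ℓ]; omega
    have hmod : (ℓ * d + p) % (L * ℓ) = ℓ * (d % L) + p := by
      have hlt : ℓ * (d % L) + p < L * ℓ := by nlinarith [Nat.mod_lt d hL]
      conv_lhs => rw [← Nat.mod_add_div d L]
      rw [mul_add, ← mul_assoc, mul_comm ℓ L, add_right_comm, Nat.add_mul_mod_self_left,
        Nat.mod_eq_of_lt hlt]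
    rw [if_neg hi, if_neg (by nlinarith), hsub, hmod, Nat.add_sub_cancel_left]
    ring

theorem periodicTailIndex_succ (L i : ℕ) :
    periodicTailIndex L (i + 1) =
      if periodicTailIndex L i + 1 = 2 * L then L else periodicTailIndex L i + 1 := by
  rcases Nat.eq_zero_or_pos L with rfl | hL
  · simp [periodicTailIndex]
  unfold periodicTailIndex
  by_cases hi : i < L
  · by_cases hi' : i + 1 < L
    · simp only [if_pos hi', if_pos hi]; split_ifs <;> omega
    · simp only [if_neg hi', if_pos hi, show i + 1 - L = 0 by omega, Nat.zero_mod]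
      split_ifs <;> omega
  · obtain ⟨d, rfl⟩ := Nat.exists_eq_add_of_le (not_lt.mp hi)
    have hd := Nat.mod_add_div d L
    have hr := Nat.mod_lt d hL
    have hsucc : (d + 1) % L = (d % L + 1) % L := by
      conv_lhs => rw [← hd]
      rw [add_right_comm, Nat.add_mul_mod_self_left]
    rw [if_neg hi, if_neg (by omega), show L + d + 1 - L = d + 1 by omega, Nat.add_sub_cancel_left,
      hsucc]
    rcases Nat.lt_or_ge (d % L + 1) L with hlt | hge
    · rw [Nat.mod_eq_of_lt hlt]; split_ifs <;> omega
    · rw [show d % L + 1 = L by omega, Nat.mod_self]; split_ifs <;> omega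

/-- The wrap-around of `periodicTailIndex L` from `2L - 1` back to `L` is invisible to the
one-bit memory of the automaton as soon as `b (L - 1) = b (2L - 1)`. -/
theorem prevBit_comp_periodicTailIndex {b : ℕ → ℕ} {L : ℕ} (hb : b (L - 1) = b (2 * L - 1))
    (i : ℕ) : prevBit (b ∘ periodicTailIndex L) i = prevBit b (periodicTailIndex L i) := by
  rcases i with _ | i
  · simp [prevBit, periodicTailIndex]
  · rw [periodicTailIndex_succ]
    split_ifs with hwrap
    · simp only [prevBit, Function.comp_apply, Nat.add_sub_cancel, show L ≠ 0 by omega,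
        if_false, hb, show periodicTailIndex L i = 2 * L - 1 by omega, Nat.add_one_ne_zero]
    · simp [prevBit]

theorem phiInvSeq_comp_periodicTailIndex (M : ℕ) {a : List ℕ} (ha : a ≠ []) {b : ℕ → ℕ}
    {L : ℕ} (hb : b (L - 1) = b (2 * L - 1)) :
    phiInvSeq M a (b ∘ periodicTailIndex L) =
      phiInvSeq M a b ∘ periodicTailIndex (L * a.length) := by
  funext j
  have hℓ : 0 < a.length := List.length_pos_iff.mpr ha
  rw [← Nat.div_add_mod j a.length, Function.comp_apply,
    periodicTailIndex_mul_add L _ (Nat.mod_lt j hℓ), phiInvSeq_mul_add _ _ _ (Nat.mod_lt j hℓ),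
    phiInvSeq_mul_add _ _ _ (Nat.mod_lt j hℓ), prevBit_comp_periodicTailIndex hb]
  rfl

theorem block_unitLift_of_even {M : ℕ} (hM : 1 ≤ M) (hM2 : M % 2 = 0) {p c : ℕ} (hp : p ≤ 1)
    (hc : c ≤ 1) : block M (unitLift M) p c = [M / 2 + c - p] := by
  have hk : M = M / 2 + M / 2 := by omega
  interval_cases p <;> interval_cases c <;> simp [block, unitLift, hM2, wplus, reflW] <;> omega

theorem block_unitLift_of_odd {M : ℕ} (hM2 : M % 2 = 1) {p c : ℕ} (hp : p ≤ 1) (hc : c ≤ 1) :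
    block M (unitLift M) p c = [M / 2 + 1 - p, M / 2 + c] := by
  have hk : M = M / 2 + M / 2 + 1 := by omega
  interval_cases p <;> interval_cases c <;> simp [block, unitLift, hM2, wplus, reflW] <;> omega

theorem phiInvSeq_unitLift_of_even {M : ℕ} (hM : 1 ≤ M) (hM2 : M % 2 = 0) {b : ℕ → ℕ}
    (hb : ∀ i, b i ≤ 1) (i : ℕ) :
    phiInvSeq M (unitLift M) b i = M / 2 + b i - prevBit b i := by
  have hlen : (unitLift M).length = 1 := by simp [unitLift, hM2]
  have h := phiInvSeq_mul_add M (a := unitLift M) b i (p := 0) (by simp [hlen])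
  rwa [hlen, one_mul, add_zero, block_unitLift_of_even hM hM2 (prevBit_le_one hb i) (hb i)] at h

theorem phiInvSeq_unitLift_of_odd {M : ℕ} (hM2 : M % 2 = 1) {b : ℕ → ℕ} (hb : ∀ i, b i ≤ 1)
    (i : ℕ) :
    phiInvSeq M (unitLift M) b (2 * i) = M / 2 + 1 - prevBit b i ∧
      phiInvSeq M (unitLift M) b (2 * i + 1) = M / 2 + b i := by
  have hlen : (unitLift M).length = 2 := by simp [unitLift, hM2]
  have hblock := block_unitLift_of_odd hM2 (prevBit_le_one hb i) (hb i)
  constructor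
  · simpa [hlen, hblock] using phiInvSeq_mul_add M (a := unitLift M) b i (p := 0) (by simp [hlen])
  · simpa [hlen, hblock] using phiInvSeq_mul_add M (a := unitLift M) b i (p := 1) (by simp [hlen])

theorem phiInvSeq_unitLift_tauSeq {M : ℕ} (hM : 1 ≤ M) :
    phiInvSeq M (unitLift M) tauSeq = lamSeq M := by
  have hbit : ∀ i, tauSeq i ≤ 1 := fun i => tau_le_one _
  funext j
  rcases Nat.mod_two_eq_zero_or_one M with hM2 | hM2
  · rw [phiInvSeq_unitLift_of_even hM hM2 hbit, lamSeq_of_even hM2, prevBit_tauSeq]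
    rfl
  · obtain ⟨i, rfl | rfl⟩ := Nat.even_or_odd' j
    · rw [(phiInvSeq_unitLift_of_odd hM2 hbit i).1, lamSeq_of_odd hM2, prevBit_tauSeq,
        tau_two_mul_add_one]
      have := tau_le_one i
      omega
    · rw [(phiInvSeq_unitLift_of_odd hM2 hbit i).2, lamSeq_of_odd hM2,
        show 2 * i + 1 + 1 = 2 * (i + 1) by ring, tau_two_mul]
      rfl

/-- Φ_{u_M}⁻¹((τ_i)) = (λ_i), and for each n ≥ 1,
Φ_{u_M}⁻¹(α*(q_n'(1))) = α(q_{n+1}'(M)). -/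
theorem statement9 (M : ℕ) (hM : 1 ≤ M) :
    phiInvSeq M (unitLift M) tauSeq = lamSeq M ∧
    ∀ n : ℕ, 1 ≤ n → phiInvSeq M (unitLift M) (alphaQn 1 n) = alphaQn M (n + 1) := by
  refine ⟨phiInvSeq_unitLift_tauSeq hM, fun n _ => ?_⟩
  have hcorner : tauSeq (2 ^ n - 1) = tauSeq (2 * 2 ^ n - 1) := by
    simp only [tauSeq, Nat.sub_add_cancel (Nat.one_le_two_pow), ← pow_succ', tau_two_pow]
  have hlen : 2 ^ n * (unitLift M).length =
      if M % 2 = 0 then 2 ^ (n + 1 - 1) else 2 ^ (n + 1) := by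
    split_ifs with hM2 <;> simp [unitLift, hM2, pow_succ]
  have hne : unitLift M ≠ [] := by unfold unitLift; split_ifs <;> simp
  rw [alphaQn_one_eq_tauSeq_comp, phiInvSeq_comp_periodicTailIndex M hne hcorner,
    phiInvSeq_unitLift_tauSeq hM, alphaQn_eq_lamSeq_comp hM, hlen]
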